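/- Let G be a finite connected graph with n vertices and m edges, and let 𝖡 ∈ ℝ^{n×m} be a matrix whose sparsity pattern matches the incidence structure of G (column j has nonzero entries only in the rows of the endpoints of edge j), with at least one column j₀ having exactly one nonzero entry (a boundary edge). If T is a spanning tree of G rooted at the endpoint of edge j₀ and J is the set of the n−1 tree edges together with j₀, then the square submatrix of 𝖡 formed by the columns indexed by J is invertible. -/

import Mathlib

/-!
Send the boundary column `j₀` to the root `i₀` and each tree edge to its endpoint farther from
`i₀`. Since in a tree every vertex other than the root has exactly one neighbour closer to the
root, this is an injection `σ` from `J` to the vertices, hence a bijection. Column `j` of `B` is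
nonzero in row `σ j` and otherwise only in a row strictly closer to `i₀`, so after permuting the
columns by `σ` the submatrix is triangular for the distance to `i₀`, with nonzero diagonal.
-/

namespace Matrix

variable {ι κ R : Type*} [Fintype κ]

theorem mulVec_injective_of_triangular {α : Type*} [Preorder α]
    [NonUnitalNonAssocRing R] [NoZeroDivisors R]
    {M : Matrix ι κ R} {σ : κ → ι} (hσ : Function.Injective σ) (f : ι → α)
    (hdiag : ∀ j, M (σ j) j ≠ 0) (htri : ∀ i j, M i j ≠ 0 → i = σ j ∨ f i < f (σ j)) :
    Function.Injective M.mulVec := by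
  intro x y hxy
  set z := x - y with hz
  have hker : M *ᵥ z = 0 := by rw [hz, mulVec_sub, hxy, sub_self]
  suffices ∀ j, z j = 0 from sub_eq_zero.mp (funext this)
  -- downward induction on `f ∘ σ`, well founded because `κ` is finite
  have hwf : WellFounded (fun k j : κ => f (σ j) < f (σ k)) :=
    InvImage.wf (Set.rangeFactorization (f ∘ σ)) wellFounded_gt
  intro j
  induction j using hwf.induction with
  | _ j ih =>
  have hrow : M (σ j) ⬝ᵥ z = M (σ j) j * z j := by
    refine Finset.sum_eq_single j (fun k _ hkj => ?_) (by simp)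
    by_cases hM : M (σ j) k = 0
    · rw [hM, zero_mul]
    · rcases htri _ _ hM with h | h
      · exact absurd (hσ h).symm hkj
      · rw [ih k h, mul_zero]
  have := congrFun hker (σ j)
  rw [mulVec, hrow] at this
  exact (mul_eq_zero.mp this).resolve_left (hdiag j)

theorem mulVec_bijective_of_injective [Fintype ι] {K : Type*} [Field K] {M : Matrix ι κ K}
    (hcard : Fintype.card κ = Fintype.card ι) (h : Function.Injective M.mulVec) :
    Function.Bijective M.mulVec := by
  rw [← coe_mulVecLin] at h ⊢
  exact ⟨h, (LinearMap.injective_iff_surjective_of_finrank_eq_finrank (by simp [hcard])).mp h⟩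

end Matrix

namespace SimpleGraph

variable {V κ : Type*} {G : SimpleGraph V}

theorem IsTree.mem_support_of_adj_of_dist_lt (hG : G.IsTree) {r a b : V} (hab : G.Adj a b)
    (h : G.dist r a < G.dist r b) {q : G.Walk r b} (hq : q.IsPath) : a ∈ q.support := by
  classical
  obtain ⟨p, hp, hplen⟩ := hG.connected.exists_path_of_dist r a
  refine hG.isAcyclic.mem_support_of_ne_mem_support_of_adj_of_isPath hq hp hab.symm fun hb => ?_
  have := (dist_le (p.takeUntil b hb)).trans (p.length_takeUntil_le_length hb)
  omega

theorem IsTree.eq_of_adj_of_dist_lt (hG : G.IsTree) (r : V) {a b c : V} (hab : G.Adj a b)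
    (hcb : G.Adj c b) (ha : G.dist r a < G.dist r b) (hc : G.dist r c < G.dist r b) : a = c := by
  obtain ⟨q, hq, -⟩ := hG.connected.exists_path_of_dist r b
  rw [hG.isAcyclic.eq_penultimate_of_adj_end hq hab.symm
      (hG.mem_support_of_adj_of_dist_lt hab ha hq),
    hG.isAcyclic.eq_penultimate_of_adj_end hq hcb.symm
      (hG.mem_support_of_adj_of_dist_lt hcb hc hq)]

theorem IsTree.exists_mem_forall_mem_dist_lt (hG : G.IsTree) (r : V) {e : Sym2 V}
    (he : e ∈ G.edgeSet) : ∃ v ∈ e, ∀ i ∈ e, i = v ∨ G.dist r i < G.dist r v := by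
  induction e using Sym2.ind with
  | _ a b =>
  rcases (hG.dist_ne_of_adj r he).lt_or_gt with h | h
  · refine ⟨b, Sym2.mem_mk_right a b, fun i hi => ?_⟩
    rcases Sym2.mem_iff.mp hi with rfl | rfl <;> simp_all
  · refine ⟨a, Sym2.mem_mk_left a b, fun i hi => ?_⟩
    rcases Sym2.mem_iff.mp hi with rfl | rfl <;> simp_all

theorem exists_adj_dist_lt_of_mem_edgeSet {r v : V} {e : Sym2 V} (he : e ∈ G.edgeSet)
    (hv : v ∈ e) (hfar : ∀ i ∈ e, i = v ∨ G.dist r i < G.dist r v) :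
    ∃ a, e = s(a, v) ∧ G.Adj a v ∧ G.dist r a < G.dist r v := by
  obtain ⟨a, rfl⟩ := Sym2.mem_iff_exists.mp hv
  have hadj : G.Adj a v := (mem_edgeSet G).mp he |>.symm
  exact ⟨a, Sym2.eq_swap, hadj, (hfar a (Sym2.mem_mk_right v a)).resolve_left hadj.ne⟩

theorem IsTree.eq_of_mem_of_forall_dist_lt (hG : G.IsTree) (r : V) {v : V} {e e' : Sym2 V}
    (he : e ∈ G.edgeSet) (he' : e' ∈ G.edgeSet) (hv : v ∈ e) (hv' : v ∈ e')
    (hfar : ∀ i ∈ e, i = v ∨ G.dist r i < G.dist r v)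
    (hfar' : ∀ i ∈ e', i = v ∨ G.dist r i < G.dist r v) : e = e' := by
  obtain ⟨a, rfl, hav, ha⟩ := exists_adj_dist_lt_of_mem_edgeSet he hv hfar
  obtain ⟨c, rfl, hcv, hc⟩ := exists_adj_dist_lt_of_mem_edgeSet he' hv' hfar'
  rw [hG.eq_of_adj_of_dist_lt r hav hcv ha hc]

theorem IsTree.injOn_and_mem_edgeSet_of_fromEdgeSet_image [Fintype V] {ends : κ → Sym2 V}
    {S : Finset κ} (hT : (fromEdgeSet (ends '' S)).IsTree) (hS : S.card + 1 = Fintype.card V) :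
    Set.InjOn ends S ∧ ∀ j ∈ S, ends j ∈ (fromEdgeSet (ends '' S)).edgeSet := by
  classical
  set T := fromEdgeSet (ends '' S)
  have hsub : T.edgeFinset ⊆ S.image ends := fun e he => by
    have he' := mem_edgeFinset.mp he
    rw [edgeSet_fromEdgeSet] at he'
    obtain ⟨⟨j, hj, rfl⟩, -⟩ := he'
    exact Finset.mem_image_of_mem ends hj
  -- a tree on `card V` vertices has `S.card` edges, so no label is a loop or a repeated edge
  have hT_card : T.edgeFinset.card = S.card := by
    have := hT.card_edgeFinset
    omega
  have himage_card : (S.image ends).card ≤ S.card := Finset.card_image_le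
  have heq : T.edgeFinset = S.image ends :=
    Finset.eq_of_subset_of_card_le hsub (himage_card.trans hT_card.ge)
  refine ⟨Finset.injOn_of_card_image_eq (by rw [← heq, hT_card]), fun j hj => ?_⟩
  rw [← mem_edgeFinset, heq]
  exact Finset.mem_image_of_mem ends hj

theorem IsTree.exists_injective_of_fromEdgeSet_erase [Fintype V] [DecidableEq κ]
    {ends : κ → Sym2 V} {J : Finset κ} {j₀ : κ} {r : V} (hj₀J : j₀ ∈ J) (hj₀ : ends j₀ = s(r, r))
    (hcard : J.card = Fintype.card V) (hT : (fromEdgeSet (ends '' ↑(J.erase j₀))).IsTree) :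
    ∃ σ : J → V, Function.Injective σ ∧ ∀ j : J, σ j ∈ ends j ∧
      ∀ i ∈ ends j, i = σ j ∨ (fromEdgeSet (ends '' ↑(J.erase j₀))).dist r i <
        (fromEdgeSet (ends '' ↑(J.erase j₀))).dist r (σ j) := by
  set T := fromEdgeSet (ends '' ↑(J.erase j₀))
  obtain ⟨hinj, hmem_edgeSet⟩ := hT.injOn_and_mem_edgeSet_of_fromEdgeSet_image
    (by rw [Finset.card_erase_of_mem hj₀J]; have := J.card_pos.mpr ⟨j₀, hj₀J⟩; omega)
  have hedge : ∀ j : J, (j : κ) ≠ j₀ → ends j ∈ T.edgeSet :=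
    fun j hj => hmem_edgeSet j (Finset.mem_erase.mpr ⟨hj, j.2⟩)
  have hfar : ∀ j : J, ∃ v ∈ ends j, ∀ i ∈ ends j, i = v ∨ T.dist r i < T.dist r v := fun j => by
    by_cases hj : (j : κ) = j₀
    · exact ⟨r, by simp [hj, hj₀], fun i hi => by simp_all⟩
    · exact hT.exists_mem_forall_mem_dist_lt r (hedge j hj)
  choose σ hσ hσfar using hfar
  have hroot : ∀ j : J, (j : κ) = j₀ → σ j = r := fun j hj => by
    simpa [hj, hj₀] using hσ j
  refine ⟨σ, fun j k hjk => ?_, fun j => ⟨hσ j, hσfar j⟩⟩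
  by_cases hj : (j : κ) = j₀ <;> by_cases hk : (k : κ) = j₀
  · exact Subtype.ext (hj.trans hk.symm)
  · obtain ⟨c, -, -, hc⟩ := exists_adj_dist_lt_of_mem_edgeSet (hedge k hk) (hσ k) (hσfar k)
    simp [← hjk, hroot j hj] at hc
  · obtain ⟨a, -, -, ha⟩ := exists_adj_dist_lt_of_mem_edgeSet (hedge j hj) (hσ j) (hσfar j)
    simp [hjk, hroot k hk] at ha
  · refine Subtype.ext (hinj (Finset.mem_erase.mpr ⟨hj, j.2⟩) (Finset.mem_erase.mpr ⟨hk, k.2⟩) ?_)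
    exact hT.eq_of_mem_of_forall_dist_lt r (hedge j hj) (hedge k hk) (hσ j) (hjk ▸ hσ k)
      (hσfar j) (hjk ▸ hσfar k)

end SimpleGraph

theorem spanning_tree_submatrix_invertible_general
    (n m : ℕ) (B : Matrix (Fin n) (Fin m) ℝ)
    (ends : Fin m → Sym2 (Fin n))
    (j₀ : Fin m) (i₀ : Fin n)
    (hj₀ : ends j₀ = s(i₀, i₀))
    (hsparsity : ∀ i j, B i j ≠ 0 ↔ i ∈ ends j)
    (J : Finset (Fin m)) (hj₀J : j₀ ∈ J) (hcard : J.card = n)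
    (htree : (SimpleGraph.fromEdgeSet (ends '' ↑(J.erase j₀))).IsTree) :
    Function.Bijective
      (fun x : {j // j ∈ J} → ℝ => fun i : Fin n => ∑ j : {j // j ∈ J}, B i j * x j) := by
  obtain ⟨σ, hσinj, hσ⟩ :=
    htree.exists_injective_of_fromEdgeSet_erase hj₀J hj₀ (by rw [hcard, Fintype.card_fin])
  have hinj : Function.Injective (B.submatrix id Subtype.val).mulVec :=
    Matrix.mulVec_injective_of_triangular hσinj
      ((SimpleGraph.fromEdgeSet (ends '' ↑(J.erase j₀))).dist i₀)
      (fun j => (hsparsity _ _).mpr (hσ j).1)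
      (fun i j h => (hσ j).2 i ((hsparsity i j).mp h))
  exact Matrix.mulVec_bijective_of_injective (by simp [hcard]) hinj

/-- Spanning-tree solve: the submatrix of the (divergence/incidence-pattern)
matrix `B` given by the columns of a spanning tree together with one boundary
column `j₀` is invertible, i.e. the corresponding linear map is bijective. -/
theorem spanning_tree_submatrix_invertible
    (n m : ℕ) (B : Matrix (Fin n) (Fin m) ℝ)
    (ends : Fin m → Sym2 (Fin n))
    (G : SimpleGraph (Fin n)) (hG : G.Connected)
    (hedges : ∀ j : Fin m, ¬ (ends j).IsDiag → ends j ∈ G.edgeSet)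
    (j₀ : Fin m) (i₀ : Fin n)
    (hj₀ : ends j₀ = s(i₀, i₀))
    (hsparsity : ∀ i j, B i j ≠ 0 ↔ i ∈ ends j)
    (J : Finset (Fin m)) (hj₀J : j₀ ∈ J) (hcard : J.card = n)
    (htree : (SimpleGraph.fromEdgeSet (ends '' ↑(J.erase j₀))).IsTree) :
    Function.Bijective
      (fun x : {j // j ∈ J} → ℝ => fun i : Fin n => ∑ j : {j // j ∈ J}, B i j * x j) :=
  spanning_tree_submatrix_invertible_general n m B ends j₀ i₀ hj₀ hsparsity J hj₀J hcard htree
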